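/- Let (C, C₋, C₊) be a Reedy category. The quotient functor q : ∫N^{-,+}(C) → Down_*(C) (identity on objects, sending each morphism to its ∼-class) is a strict 1-localization of ∫N^{-,+}(C) at the class Γ₋ of morphisms of the form (σ, id_{X∘σ}) : ([m], X ∘ σ) → ([n], X) with σ : [m] → [n] surjective in Δ. That is: q sends every morphism of Γ₋ to an isomorphism, and for every category E and functor G : ∫N^{-,+}(C) → E sending every morphism of Γ₋ to an isomorphism, there exists a unique functor H : Down_*(C) → E with H ∘ q = G. -/

import Mathlib

namespace ReedyPaper

open CategoryTheory

universe v₂ u₂ v₁ u₁ v u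

variable {C : Type u} [Category.{v} C]

def IsIdMor {x y : C} (f : x ⟶ y) : Prop := ∃ h : x = y, f = eqToHom h

structure ReedyStruct (C : Type u) [Category.{v} C] where
  neg : MorphismProperty C
  pos : MorphismProperty C
  neg_id : ∀ x : C, neg (𝟙 x)
  pos_id : ∀ x : C, pos (𝟙 x)
  neg_comp : ∀ {x y z : C} (f : x ⟶ y) (g : y ⟶ z), neg f → neg g → neg (f ≫ g)
  pos_comp : ∀ {x y z : C} (f : x ⟶ y) (g : y ⟶ z), pos f → pos g → pos (f ≫ g)
  factor_existsUnique : ∀ {x y : C} (f : x ⟶ y),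
    ∃! t : Σ z : C, (x ⟶ z) × (z ⟶ y), neg t.2.1 ∧ pos t.2.2 ∧ t.2.1 ≫ t.2.2 = f
  wf : WellFounded (fun x y : C =>
    (∃ f : x ⟶ y, pos f ∧ ¬ IsIdMor f) ∨ (∃ f : y ⟶ x, neg f ∧ ¬ IsIdMor f))

structure ChainObj (C : Type u) [Category.{v} C] where
  n : ℕ
  X : Fin (n + 1) ⥤ C

structure ChainHom (P Q : ChainObj C) where
  α : Fin (P.n + 1) →o Fin (Q.n + 1)
  θ : ∀ i : Fin (P.n + 1), P.X.obj i ⟶ Q.X.obj (α i)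
  natural : ∀ {i j : Fin (P.n + 1)} (h : i ≤ j),
    P.X.map (homOfLE h) ≫ θ j = θ i ≫ Q.X.map (homOfLE (α.monotone h))

theorem ChainHom.ext' {P Q : ChainObj C} {f g : ChainHom P Q}
    (hα : f.α = g.α) (hθ : HEq f.θ g.θ) : f = g := by
  cases f; cases g; cases hα; cases hθ; rfl

def ChainHom.id (P : ChainObj C) : ChainHom P P where
  α := OrderHom.id
  θ i := 𝟙 _
  natural h := (Category.comp_id _).trans (Category.id_comp _).symm

def ChainHom.comp {P Q S : ChainObj C} (f : ChainHom P Q) (g : ChainHom Q S) :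
    ChainHom P S where
  α := g.α.comp f.α
  θ i := f.θ i ≫ g.θ (f.α i)
  natural {i j} h := by
    show P.X.map _ ≫ (f.θ j ≫ g.θ (f.α j)) = (f.θ i ≫ g.θ (f.α i)) ≫ S.X.map _
    rw [← Category.assoc, f.natural h, Category.assoc, g.natural (f.α.monotone h),
      ← Category.assoc]
    rfl

instance : Category (ChainObj C) where
  Hom := ChainHom
  id := ChainHom.id
  comp := ChainHom.comp
  id_comp f := ChainHom.ext' rfl (heq_of_eq (funext fun i => Category.id_comp _))
  comp_id f := ChainHom.ext' rfl (heq_of_eq (funext fun i => Category.comp_id _))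
  assoc f g h := ChainHom.ext' rfl (heq_of_eq (funext fun i => Category.assoc _ _ _))

/-- The partial order on the hom-sets of `∫N(C)` (and of `∫N^{-,+}(C)`):
`(α, θ) ≤ (α', θ')` iff `α ≤ α'` pointwise and `θ'ᵢ = Y(α(i) ≤ α'(i)) ∘ θᵢ` for all `i`. -/
def ChainHom.le {P Q : ChainObj C} (f g : ChainHom P Q) : Prop :=
  (∀ i, f.α i ≤ g.α i) ∧
    ∀ (i : Fin (P.n + 1)) (h : f.α i ≤ g.α i), g.θ i = f.θ i ≫ Q.X.map (homOfLE h)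

theorem ChainHom.le_comp_right {P Q S : ChainObj C} {f f' : P ⟶ Q} (g : Q ⟶ S)
    (h : ChainHom.le f f') : ChainHom.le (f ≫ g) (f' ≫ g) := by
  refine ⟨fun i => g.α.monotone (h.1 i), fun i hi => ?_⟩
  show f'.θ i ≫ g.θ (f'.α i) = (f.θ i ≫ g.θ (f.α i)) ≫ S.X.map (homOfLE hi)
  rw [h.2 i (h.1 i), Category.assoc, g.natural (h.1 i), ← Category.assoc]
  rfl

theorem ChainHom.le_comp_left {P Q S : ChainObj C} (f : P ⟶ Q) {g g' : Q ⟶ S}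
    (h : ChainHom.le g g') : ChainHom.le (f ≫ g) (f ≫ g') := by
  refine ⟨fun i => h.1 (f.α i), fun i hi => ?_⟩
  show f.θ i ≫ g'.θ (f.α i) = (f.θ i ≫ g.θ (f.α i)) ≫ S.X.map (homOfLE hi)
  rw [h.2 (f.α i) (h.1 (f.α i)), ← Category.assoc]
  rfl

/-- Objects of `∫N^{-,+}(C)`: chains all of whose morphisms lie in `C₋`. -/
structure NegObj (R : ReedyStruct C) where
  n : ℕ
  X : Fin (n + 1) ⥤ C
  negMap : ∀ {i j : Fin (n + 1)} (h : i ≤ j), R.neg (X.map (homOfLE h))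

variable {R : ReedyStruct C}

/-- The underlying object of `∫N(C)`. -/
def NegObj.chain (P : NegObj R) : ChainObj C := ⟨P.n, P.X⟩

/-- Morphisms of `∫N^{-,+}(C)`: morphisms of `∫N(C)` all of whose components lie in `C₊`. -/
def NegHomT (P Q : NegObj R) : Type v :=
  { f : P.chain ⟶ Q.chain // ∀ i, R.pos (f.θ i) }

def NegHomT.id (P : NegObj R) : NegHomT P P := ⟨𝟙 P.chain, fun _ => R.pos_id _⟩

def NegHomT.comp {P Q S : NegObj R} (f : NegHomT P Q) (g : NegHomT Q S) : NegHomT P S :=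
  ⟨f.1 ≫ g.1, fun i => by
    show R.pos (f.1.θ i ≫ g.1.θ (f.1.α i))
    exact R.pos_comp _ _ (f.2 i) (g.2 _)⟩

theorem NegHomT.id_comp {P Q : NegObj R} (f : NegHomT P Q) : (NegHomT.id P).comp f = f := by
  apply Subtype.ext
  show 𝟙 P.chain ≫ f.1 = f.1
  exact Category.id_comp f.1

theorem NegHomT.comp_id {P Q : NegObj R} (f : NegHomT P Q) : f.comp (NegHomT.id Q) = f := by
  apply Subtype.ext
  show f.1 ≫ 𝟙 Q.chain = f.1
  exact Category.comp_id f.1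

theorem NegHomT.comp_assoc {P Q S T : NegObj R} (f : NegHomT P Q) (g : NegHomT Q S)
    (h : NegHomT S T) : (f.comp g).comp h = f.comp (g.comp h) := by
  apply Subtype.ext
  show (f.1 ≫ g.1) ≫ h.1 = f.1 ≫ (g.1 ≫ h.1)
  exact Category.assoc f.1 g.1 h.1

/-- The category `∫N^{-,+}(C)`. -/
instance : Category (NegObj R) where
  Hom := NegHomT
  id := NegHomT.id
  comp := NegHomT.comp
  id_comp := NegHomT.id_comp
  comp_id := NegHomT.comp_id
  assoc := NegHomT.comp_assoc

/-- The order on the hom-sets of `∫N^{-,+}(C)`. -/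
def NegHom.le {P Q : NegObj R} (f g : P ⟶ Q) : Prop := ChainHom.le f.1 g.1

/-- The equivalence relation `∼` on the hom-sets of `∫N^{-,+}(C)`: the
symmetric-transitive closure of `≤`. -/
def NegHom.equiv {P Q : NegObj R} (f g : P ⟶ Q) : Prop :=
  Relation.EqvGen (fun a b : P ⟶ Q => NegHom.le a b) f g

theorem NegHom.le_comp_right {P Q S : NegObj R} {f f' : P ⟶ Q} (g : Q ⟶ S)
    (h : NegHom.le f f') : NegHom.le (f ≫ g) (f' ≫ g) :=
  ChainHom.le_comp_right g.1 h

theorem NegHom.le_comp_left {P Q S : NegObj R} (f : P ⟶ Q) {g g' : Q ⟶ S}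
    (h : NegHom.le g g') : NegHom.le (f ≫ g) (f ≫ g') :=
  ChainHom.le_comp_left f.1 h

/-- Identity-reflectingness of a chain. -/
def NegObj.IdRefl (P : NegObj R) : Prop :=
  ∀ {i j : Fin (P.n + 1)} (h : i ≤ j), IsIdMor (P.X.map (homOfLE h)) → i = j

/-- Objects of `∫N^{--,+}_+(C)`: identity-reflecting chains in `C₋`. -/
structure StrictObj (R : ReedyStruct C) where
  toNegObj : NegObj R
  idRefl : toNegObj.IdRefl

/-- Morphisms of `∫N^{--,+}_+(C)`: morphisms of `∫N^{-,+}(C)` with `α` injective. -/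
def StrictHomT (P Q : StrictObj R) : Type v :=
  { f : P.toNegObj ⟶ Q.toNegObj // Function.Injective f.1.α }

def StrictHomT.id (P : StrictObj R) : StrictHomT P P :=
  ⟨𝟙 P.toNegObj, fun _ _ h => h⟩

def StrictHomT.comp {P Q S : StrictObj R} (f : StrictHomT P Q) (g : StrictHomT Q S) :
    StrictHomT P S :=
  ⟨f.1 ≫ g.1, fun _ _ h => f.2 (g.2 h)⟩

/-- The category `∫N^{--,+}_+(C)`. -/
instance : Category (StrictObj R) where
  Hom := StrictHomT
  id := StrictHomT.id
  comp := StrictHomT.comp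
  id_comp f := Subtype.ext (Category.id_comp f.1)
  comp_id f := Subtype.ext (Category.comp_id f.1)
  assoc f g h := Subtype.ext (Category.assoc f.1 g.1 h.1)

/-- The order on the hom-sets of `∫N^{--,+}_+(C)`. -/
def StrictHom.le {P Q : StrictObj R} (f g : P ⟶ Q) : Prop := NegHom.le f.1 g.1

/-- The equivalence relation `∼` on the hom-sets of `∫N^{--,+}_+(C)`. -/
def StrictHom.equiv {P Q : StrictObj R} (f g : P ⟶ Q) : Prop :=
  Relation.EqvGen (fun a b : P ⟶ Q => StrictHom.le a b) f g

theorem StrictHom.le_comp_right {P Q S : StrictObj R} {f f' : P ⟶ Q} (g : Q ⟶ S)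
    (h : StrictHom.le f f') : StrictHom.le (f ≫ g) (f' ≫ g) :=
  NegHom.le_comp_right g.1 h

theorem StrictHom.le_comp_left {P Q S : StrictObj R} (f : P ⟶ Q) {g g' : Q ⟶ S}
    (h : StrictHom.le g g') : StrictHom.le (f ≫ g) (f ≫ g') :=
  NegHom.le_comp_left f.1 h

/-- Objects of `Down_*(C)`: the same as those of `∫N^{-,+}(C)`. -/
structure DownStar (R : ReedyStruct C) where
  obj : NegObj R

/-- The category `Down_*(C)`: hom-sets are the quotients of those of `∫N^{-,+}(C)`
by the symmetric-transitive closure of `≤`. -/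
instance : Category (DownStar R) where
  Hom P Q := Quot (fun f g : P.obj ⟶ Q.obj => NegHom.le f g)
  id P := Quot.mk _ (𝟙 P.obj)
  comp {P Q S} f g :=
    Quot.lift
      (fun f' => Quot.lift (fun g' => Quot.mk _ (f' ≫ g'))
        (fun _ _ hg => Quot.sound (NegHom.le_comp_left f' hg)) g)
      (fun f₁ f₂ hf => Quot.inductionOn g (fun g' =>
        Quot.sound (NegHom.le_comp_right g' hf))) f
  id_comp f := Quot.inductionOn f fun f' => congrArg (Quot.mk _) (Category.id_comp f')
  comp_id f := Quot.inductionOn f fun f' => congrArg (Quot.mk _) (Category.comp_id f')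
  assoc f g h :=
    Quot.inductionOn f fun f' => Quot.inductionOn g fun g' => Quot.inductionOn h fun h' =>
      congrArg (Quot.mk _) (Category.assoc f' g' h')

/-- Objects of `Down(C)`: the same as those of `∫N^{--,+}_+(C)`. -/
structure Down (R : ReedyStruct C) where
  obj : StrictObj R

/-- The category `Down(C)`: hom-sets are the quotients of those of `∫N^{--,+}_+(C)`
by the symmetric-transitive closure of `≤`. -/
instance : Category (Down R) where
  Hom P Q := Quot (fun f g : P.obj ⟶ Q.obj => StrictHom.le f g)
  id P := Quot.mk _ (𝟙 P.obj)
  comp {P Q S} f g :=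
    Quot.lift
      (fun f' => Quot.lift (fun g' => Quot.mk _ (f' ≫ g'))
        (fun _ _ hg => Quot.sound (StrictHom.le_comp_left f' hg)) g)
      (fun f₁ f₂ hf => Quot.inductionOn g (fun g' =>
        Quot.sound (StrictHom.le_comp_right g' hf))) f
  id_comp f := Quot.inductionOn f fun f' => congrArg (Quot.mk _) (Category.id_comp f')
  comp_id f := Quot.inductionOn f fun f' => congrArg (Quot.mk _) (Category.comp_id f')
  assoc f g h :=
    Quot.inductionOn f fun f' => Quot.inductionOn g fun g' => Quot.inductionOn h fun h' =>
      congrArg (Quot.mk _) (Category.assoc f' g' h')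

/-- The quotient functor `∫N^{-,+}(C) → Down_*(C)`. -/
def qStar (R : ReedyStruct C) : NegObj R ⥤ DownStar R where
  obj P := ⟨P⟩
  map f := Quot.mk _ f
  map_id _ := rfl
  map_comp _ _ := rfl

/-- The inclusion functor `Down(C) → Down_*(C)`. -/
def downInclusion (R : ReedyStruct C) : Down R ⥤ DownStar R where
  obj P := ⟨P.obj.toNegObj⟩
  map {P Q} f :=
    Quot.lift (fun f' : P.obj ⟶ Q.obj => Quot.mk _ f'.1) (fun _ _ h => Quot.sound h) f
  map_id _ := rfl
  map_comp {P Q S} f g := by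
    induction f using Quot.ind
    induction g using Quot.ind
    rfl

/-- The last-component functor `∫N(C) → C`. -/
def lastChain : ChainObj C ⥤ C where
  obj P := P.X.obj (Fin.last P.n)
  map {P Q} f := f.θ (Fin.last P.n) ≫ Q.X.map (homOfLE (Fin.le_last (f.α (Fin.last P.n))))
  map_id P := by
    show 𝟙 (P.X.obj (Fin.last P.n)) ≫ P.X.map (homOfLE (Fin.le_last (Fin.last P.n))) = 𝟙 _
    rw [Category.id_comp]
    exact P.X.map_id _
  map_comp {P Q S} f g := by
    show (f.θ (Fin.last P.n) ≫ g.θ (f.α (Fin.last P.n))) ≫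
        S.X.map (homOfLE (Fin.le_last (g.α (f.α (Fin.last P.n))))) =
      (f.θ (Fin.last P.n) ≫ Q.X.map (homOfLE (Fin.le_last (f.α (Fin.last P.n))))) ≫
        g.θ (Fin.last Q.n) ≫ S.X.map (homOfLE (Fin.le_last (g.α (Fin.last Q.n))))
    rw [Category.assoc, Category.assoc, ← Category.assoc (Q.X.map _),
      g.natural (Fin.le_last (f.α (Fin.last P.n))), Category.assoc, ← Functor.map_comp,
      homOfLE_comp]

theorem lastChain_eq_of_le {P Q : ChainObj C} {f g : P ⟶ Q} (h : ChainHom.le f g) :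
    lastChain.map f = lastChain.map g := by
  show f.θ (Fin.last P.n) ≫ Q.X.map (homOfLE (Fin.le_last (f.α (Fin.last P.n)))) =
    g.θ (Fin.last P.n) ≫ Q.X.map (homOfLE (Fin.le_last (g.α (Fin.last P.n))))
  rw [h.2 (Fin.last P.n) (h.1 (Fin.last P.n)), Category.assoc, ← Functor.map_comp,
    homOfLE_comp]

/-- The forgetful functor `∫N^{-,+}(C) → ∫N(C)`. -/
def negForget (R : ReedyStruct C) : NegObj R ⥤ ChainObj C where
  obj P := P.chain
  map f := f.1
  map_id _ := rfl
  map_comp _ _ := rfl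

/-- The last-component functor `∫N^{-,+}(C) → C`. -/
def lastNeg (R : ReedyStruct C) : NegObj R ⥤ C := negForget R ⋙ lastChain

/-- The forgetful functor `∫N^{--,+}_+(C) → ∫N^{-,+}(C)`. -/
def strictForget (R : ReedyStruct C) : StrictObj R ⥤ NegObj R where
  obj P := P.toNegObj
  map f := f.1
  map_id _ := rfl
  map_comp _ _ := rfl

/-- The last-component functor `∫N^{--,+}_+(C) → C`. -/
def lastStrict (R : ReedyStruct C) : StrictObj R ⥤ C := strictForget R ⋙ lastNeg R

/-- The last-component functor `Down_*(C) → C`. -/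
def lastDownStar (R : ReedyStruct C) : DownStar R ⥤ C where
  obj P := (lastNeg R).obj P.obj
  map {P Q} f :=
    Quot.lift (fun f' : P.obj ⟶ Q.obj => (lastNeg R).map f')
      (fun _ _ h => lastChain_eq_of_le h) f
  map_id P := (lastNeg R).map_id P.obj
  map_comp {P Q S} f g := by
    induction f using Quot.ind
    induction g using Quot.ind
    exact (lastNeg R).map_comp _ _

/-- The last-component functor `Down(C) → C`. -/
def lastDown (R : ReedyStruct C) : Down R ⥤ C where
  obj P := (lastStrict R).obj P.obj
  map {P Q} f :=
    Quot.lift (fun f' : P.obj ⟶ Q.obj => (lastStrict R).map f')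
      (fun _ _ h => lastChain_eq_of_le h) f
  map_id P := (lastStrict R).map_id P.obj
  map_comp {P Q S} f g := by
    induction f using Quot.ind
    induction g using Quot.ind
    exact (lastStrict R).map_comp _ _

/-- The wide subcategory `Γ₋` of `∫N^{-,+}(C)`: morphisms of the form
`(σ, id) : ([m], X ∘ σ) → ([n], X)` with `σ` surjective, i.e. morphisms whose simplicial
component is surjective and all of whose components are identities. -/
def GammaNeg (R : ReedyStruct C) {P Q : NegObj R} (f : P ⟶ Q) : Prop :=
  Function.Surjective f.1.α ∧ ∀ i, IsIdMor (f.1.θ i)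

/-- The wide subcategory `Γ₊` of `∫N^{-,+}(C)`: morphisms `(δ, θ)` with `δ` injective. -/
def GammaPos (R : ReedyStruct C) {P Q : NegObj R} (f : P ⟶ Q) : Prop :=
  Function.Injective f.1.α

/-- Whiskering (precomposition) with `lastF` is bijective on natural transformations
between functors out of `C`. -/
def WhiskerUnique {Γ : Type u₁} [Category.{v₁} Γ] (lastF : Γ ⥤ C) : Prop :=
  ∀ {D : Type u₂} [Category.{v₂} D] (F G : C ⥤ D)
    (ε : lastF ⋙ F ⟶ lastF ⋙ G), ∃! ε' : F ⟶ G, Functor.whiskerLeft lastF ε' = ε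

/-- `lastF : Γ ⥤ C` is a weak 1-localization of `Γ` at the `last`-weak equivalences
(the morphisms sent by `lastF` to identities). -/
def IsWeakLocalizationAtLastWeq {Γ : Type u₁} [Category.{v₁} Γ] (lastF : Γ ⥤ C) : Prop :=
  (∀ {P Q : Γ} (f : P ⟶ Q), IsIdMor (lastF.map f) → IsIso (lastF.map f)) ∧
  (∀ {E : Type u₂} [Category.{v₂} E] (G : Γ ⥤ E),
    (∀ {P Q : Γ} (f : P ⟶ Q), IsIdMor (lastF.map f) → IsIso (G.map f)) →
    ∃ H : C ⥤ E, Nonempty (lastF ⋙ H ≅ G)) ∧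
  (∀ {E : Type u₂} [Category.{v₂} E] (H H' : C ⥤ E) (θ : lastF ⋙ H ≅ lastF ⋙ H'),
    ∃! θ' : H ≅ H', Functor.isoWhiskerLeft lastF θ' = θ)


/-!
A `Γ₋`-morphism `f` with surjection `α` becomes invertible in `Down_*(C)`: the leftmost section
`d` of `α` gives a morphism `s` with `s ≫ f = 𝟙` and `f ≫ s ≤ 𝟙`.

Conversely, a functor `G` inverting `Γ₋` identifies `f ≤ g`, which is exactly what is needed to
factor it through the quotient. Switching from `g` to `f` one index at a time reduces this to
pairs `u ≤ u'` with `u' i ≤ u (i + 1)`. Such a pair is obtained from a single morphism out of the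
chain `P ∘ halve`, where `halve : [2n+1] → [n]` doubles every index, by restricting along the even
and the odd section of the `Γ₋`-morphism `π : P ∘ halve → P`; `G` sends both sections to
`(G π)⁻¹`. All these auxiliary morphisms take, index by index, the component of `f` or of `g`,
which keeps their components in `C₊`.
-/

section Localization

theorem _root_.CategoryTheory.Functor.map_homOfLE_of_eq {D : Type*} [Preorder D] (F : D ⥤ C)
    {i j : D} (h : i ≤ j) (e : i = j) : F.map (homOfLE h) = eqToHom (congrArg F.obj e) := by
  subst e
  exact F.map_id i

theorem _root_.CategoryTheory.Functor.map_homOfLE_congr {D : Type*} [Preorder D] (F : D ⥤ C)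
    {i j i' j' : D} (h : i ≤ j) (h' : i' ≤ j') (ei : i = i') (ej : j = j') :
    F.map (homOfLE h) =
      eqToHom (congrArg F.obj ei) ≫ F.map (homOfLE h') ≫ eqToHom (congrArg F.obj ej.symm) := by
  subst ei ej
  simp

theorem _root_.OrderHom.exists_leftmost_section {A B : Type*} [CompleteLinearOrder A]
    [WellFoundedLT A] [PartialOrder B] (σ : A →o B) (hσ : Function.Surjective σ) :
    ∃ d : B →o A, (∀ j, σ (d j) = j) ∧ ∀ i, d (σ i) ≤ i := by
  refine ⟨⟨fun j => sInf {i | j ≤ σ i}, fun j j' h => sInf_le_sInf fun i hi => h.trans hi⟩,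
    fun j => ?_, fun i => sInf_le le_rfl⟩
  obtain ⟨i, rfl⟩ := hσ j
  exact le_antisymm (σ.monotone (sInf_le le_rfl))
    (csInf_mem (s := {i' | σ i ≤ σ i'}) ⟨i, le_rfl⟩)

@[simps]
def halve (n : ℕ) : Fin (2 * n + 1 + 1) →o Fin (n + 1) where
  toFun k := ⟨k / 2, by omega⟩
  monotone' _ _ h := Nat.div_le_div_right (Fin.le_def.mp h)

@[simps]
def doubleEven (n : ℕ) : Fin (n + 1) →o Fin (2 * n + 1 + 1) where
  toFun i := ⟨2 * i, by omega⟩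
  monotone' _ _ h := by
    simp only [Fin.mk_le_mk]
    exact Nat.mul_le_mul_left 2 h

@[simps]
def doubleOdd (n : ℕ) : Fin (n + 1) →o Fin (2 * n + 1 + 1) where
  toFun i := ⟨2 * i + 1, by omega⟩
  monotone' _ _ h := by
    simp only [Fin.mk_le_mk]
    exact Nat.add_le_add_right (Nat.mul_le_mul_left 2 h) 1

theorem halve_doubleEven (n : ℕ) (i : Fin (n + 1)) : halve n (doubleEven n i) = i :=
  Fin.ext (by simp)

theorem halve_doubleOdd (n : ℕ) (i : Fin (n + 1)) : halve n (doubleOdd n i) = i :=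
  Fin.ext (by simp; omega)

section interleave

variable {B : Type*} {n : ℕ}

def interleave (γ γ' : Fin (n + 1) → B) (k : Fin (2 * n + 1 + 1)) : B :=
  if k.val % 2 = 0 then γ (halve n k) else γ' (halve n k)

theorem interleave_doubleEven (γ γ' : Fin (n + 1) → B) (i : Fin (n + 1)) :
    interleave γ γ' (doubleEven n i) = γ i := by
  simp [interleave, halve_doubleEven]

theorem interleave_doubleOdd (γ γ' : Fin (n + 1) → B) (i : Fin (n + 1)) :
    interleave γ γ' (doubleOdd n i) = γ' i := by
  simp [interleave, halve_doubleOdd]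

theorem interleave_monotone [Preorder B] {γ γ' : Fin (n + 1) → B}
    (hle : ∀ i, γ i ≤ γ' i) (hstep : ∀ i : Fin n, γ' i.castSucc ≤ γ i.succ) :
    Monotone (interleave γ γ') := by
  refine Fin.monotone_iff_le_succ.mpr fun k => ?_
  obtain ⟨i, hk | hk⟩ := Nat.even_or_odd' k.val
  · have hi : i < n + 1 := by omega
    rw [show k.castSucc = doubleEven n ⟨i, hi⟩ from Fin.ext hk,
      show k.succ = doubleOdd n ⟨i, hi⟩ from Fin.ext (by simp [hk]),
      interleave_doubleEven, interleave_doubleOdd]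
    exact hle _
  · have hi : i < n := by omega
    rw [show k.castSucc = doubleOdd n (Fin.castSucc ⟨i, hi⟩) from Fin.ext hk,
      show k.succ = doubleEven n (Fin.succ ⟨i, hi⟩) from Fin.ext (by simp [hk]; ring),
      interleave_doubleEven, interleave_doubleOdd]
    exact hstep _

end interleave

@[simps]
def switchAt {B : Type*} [Preorder B] {m : ℕ} (a b : Fin (m + 1) →o B) (hab : ∀ i, a i ≤ b i)
    (t : ℕ) : Fin (m + 1) →o B where
  toFun i := if t ≤ i then b i else a i
  monotone' i j h := by
    dsimp only
    split_ifs with hi hj hj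
    · exact b.monotone h
    · exact absurd (hi.trans h) hj
    · exact (a.monotone h).trans (hab j)
    · exact a.monotone h

section switchAt

variable {B : Type*} [Preorder B] {m : ℕ} (a b : Fin (m + 1) →o B) (hab : ∀ i, a i ≤ b i)

theorem switchAt_zero (i : Fin (m + 1)) : switchAt a b hab 0 i = b i := by
  simp

theorem switchAt_last (i : Fin (m + 1)) : switchAt a b hab (m + 1) i = a i := by
  simp only [switchAt_coe]
  exact if_neg (by omega)

theorem switchAt_eq_or (t : ℕ) (i : Fin (m + 1)) :
    switchAt a b hab t i = a i ∨ switchAt a b hab t i = b i := by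
  simp only [switchAt_coe]
  split_ifs
  exacts [Or.inr rfl, Or.inl rfl]

theorem switchAt_succ_le (t : ℕ) (i : Fin (m + 1)) :
    switchAt a b hab (t + 1) i ≤ switchAt a b hab t i := by
  simp only [switchAt_coe]
  split_ifs <;> first | exact le_rfl | exact hab i | omega

theorem switchAt_castSucc_le_succ (t : ℕ) (i : Fin m) :
    switchAt a b hab t i.castSucc ≤ switchAt a b hab (t + 1) i.succ := by
  simp only [switchAt_coe]
  have hi : i.castSucc ≤ i.succ := Fin.castSucc_le_succ i
  split_ifs with h₁ h₂ h₂
  · exact b.monotone hi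
  · simp at h₁ h₂; omega
  · exact (a.monotone hi).trans (hab _)
  · exact a.monotone hi

end switchAt

theorem ReedyStruct.pos_eqToHom (R : ReedyStruct C) {x y : C} (e : x = y) :
    R.pos (eqToHom e) := by
  subst e
  exact R.pos_id x

variable {P Q S : NegObj R}

namespace NegHomT

/- Constructor and accessors phrased through `P.X` rather than `P.chain.X`: the two are only
definitionally equal, and the mismatch blocks rewriting. -/

def mk' (α : Fin (P.n + 1) →o Fin (Q.n + 1)) (θ : ∀ i, P.X.obj i ⟶ Q.X.obj (α i))
    (natural : ∀ {i j : Fin (P.n + 1)} (h : i ≤ j),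
      P.X.map (homOfLE h) ≫ θ j = θ i ≫ Q.X.map (homOfLE (α.monotone h)))
    (pos : ∀ i, R.pos (θ i)) : P ⟶ Q :=
  ⟨⟨α, θ, natural⟩, pos⟩

def α (f : P ⟶ Q) : Fin (P.n + 1) →o Fin (Q.n + 1) := f.1.α

def θ (f : P ⟶ Q) (i : Fin (P.n + 1)) : P.X.obj i ⟶ Q.X.obj (f.α i) := f.1.θ i

theorem natural (f : P ⟶ Q) {i j : Fin (P.n + 1)} (h : i ≤ j) :
    P.X.map (homOfLE h) ≫ f.θ j = f.θ i ≫ Q.X.map (homOfLE (f.α.monotone h)) :=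
  f.1.natural h

theorem pos (f : P ⟶ Q) (i : Fin (P.n + 1)) : R.pos (f.θ i) := f.2 i

@[simp]
theorem mk'_α (α : Fin (P.n + 1) →o Fin (Q.n + 1)) (θ : ∀ i, P.X.obj i ⟶ Q.X.obj (α i))
    (natural) (pos) : (mk' α θ natural pos).α = α := rfl

@[simp]
theorem mk'_θ (α : Fin (P.n + 1) →o Fin (Q.n + 1)) (θ : ∀ i, P.X.obj i ⟶ Q.X.obj (α i))
    (natural) (pos) (i) : (mk' α θ natural pos).θ i = θ i := rfl

@[simp]
theorem id_α (P : NegObj R) (i : Fin (P.n + 1)) : (𝟙 P : P ⟶ P).α i = i := rfl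

@[simp]
theorem id_θ (P : NegObj R) (i : Fin (P.n + 1)) : (𝟙 P : P ⟶ P).θ i = 𝟙 _ := rfl

@[simp]
theorem comp_α (f : P ⟶ Q) (g : Q ⟶ S) (i : Fin (P.n + 1)) : (f ≫ g).α i = g.α (f.α i) := rfl

@[simp]
theorem comp_θ (f : P ⟶ Q) (g : Q ⟶ S) (i : Fin (P.n + 1)) :
    (f ≫ g).θ i = f.θ i ≫ g.θ (f.α i) := rfl

theorem ext {f g : P ⟶ Q} (hα : ∀ i, f.α i = g.α i)
    (hθ : ∀ i, f.θ i ≫ eqToHom (congrArg Q.X.obj (hα i)) = g.θ i) : f = g := by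
  obtain ⟨⟨α, θ, _⟩, _⟩ := f
  obtain ⟨⟨α', θ', _⟩, _⟩ := g
  obtain rfl : α = α' := OrderHom.ext _ _ (funext hα)
  obtain rfl : θ = θ' := funext fun i => (Category.comp_id _).symm.trans (hθ i)
  rfl

theorem map_eq_of_isIdMor (f : P ⟶ Q) (hid : ∀ i, IsIdMor (f.θ i)) {i i' : Fin (P.n + 1)}
    (h : i ≤ i') :
    P.X.map (homOfLE h) = eqToHom (hid i).fst ≫ Q.X.map (homOfLE (f.α.monotone h)) ≫
      eqToHom (hid i').fst.symm := by
  have := f.natural h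
  rw [(hid i).snd, (hid i').snd, comp_eqToHom_iff] at this
  simpa using this

def gammaSection (f : P ⟶ Q) (hid : ∀ i, IsIdMor (f.θ i)) (d : Fin (Q.n + 1) →o Fin (P.n + 1))
    (hd : ∀ j, f.α (d j) = j) : Q ⟶ P :=
  mk' d (fun j => eqToHom ((hid (d j)).fst.trans (congrArg Q.X.obj (hd j))).symm)
    (fun {j j'} h => by
      rw [f.map_eq_of_isIdMor hid,
        Q.X.map_homOfLE_congr h (f.α.monotone (d.monotone h)) (hd j).symm (hd j').symm]
      simp)
    (fun _ => R.pos_eqToHom _)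

theorem gammaSection_comp (f : P ⟶ Q) (hid : ∀ i, IsIdMor (f.θ i))
    (d : Fin (Q.n + 1) →o Fin (P.n + 1)) (hd : ∀ j, f.α (d j) = j) :
    f.gammaSection hid d hd ≫ f = 𝟙 Q :=
  ext hd fun j => by
    dsimp [gammaSection]
    rw [(hid (d j)).snd]
    erw [eqToHom_trans, eqToHom_trans, eqToHom_refl]

end NegHomT

namespace NegHom

variable {f g : P ⟶ Q}

theorem le.α_le (hfg : NegHom.le f g) (i : Fin (P.n + 1)) : f.α i ≤ g.α i := hfg.1 i

theorem le.θ_eq (hfg : NegHom.le f g) (i : Fin (P.n + 1)) :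
    g.θ i = f.θ i ≫ Q.X.map (homOfLE (hfg.α_le i)) := hfg.2 i _

theorem le_of_θ_eq (hα : ∀ i, f.α i ≤ g.α i)
    (hθ : ∀ i, g.θ i = f.θ i ≫ Q.X.map (homOfLE (hα i))) : NegHom.le f g :=
  ⟨hα, fun i _ => hθ i⟩

theorem le.le_of_eq_or (hfg : NegHom.le f g) {i : Fin (P.n + 1)} {b : Fin (Q.n + 1)}
    (h : b = f.α i ∨ b = g.α i) : f.α i ≤ b :=
  h.elim (fun e => e.ge) fun e => (hfg.α_le i).trans e.ge

theorem le.θ_comp_map_of_eq (hfg : NegHom.le f g) {i : Fin (P.n + 1)} {b : Fin (Q.n + 1)}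
    (h : f.α i ≤ b) (e : g.α i = b) :
    f.θ i ≫ Q.X.map (homOfLE h) = g.θ i ≫ eqToHom (congrArg Q.X.obj e) := by
  subst e
  rw [hfg.θ_eq]
  simp

end NegHom

theorem NegHomT.comp_gammaSection_le (f : P ⟶ Q) (hid : ∀ i, IsIdMor (f.θ i))
    (d : Fin (Q.n + 1) →o Fin (P.n + 1)) (hd : ∀ j, f.α (d j) = j)
    (hdf : ∀ i, d (f.α i) ≤ i) : NegHom.le (f ≫ f.gammaSection hid d hd) (𝟙 P) :=
  NegHom.le_of_θ_eq hdf fun i => by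
    dsimp [gammaSection]
    rw [f.map_eq_of_isIdMor hid, Q.X.map_homOfLE_of_eq _ (hd _)]
    simp [(hid i).snd]

theorem isIso_qStar_map_of_gammaNeg (f : P ⟶ Q) (hf : GammaNeg R f) :
    IsIso ((qStar R).map f) := by
  obtain ⟨d, hd, hdf⟩ := f.α.exists_leftmost_section hf.1
  refine ⟨(qStar R).map (f.gammaSection hf.2 d hd), Quot.sound ?_, ?_⟩
  · exact f.comp_gammaSection_le hf.2 d hd hdf
  · exact congrArg (qStar R).map (f.gammaSection_comp hf.2 d hd)

namespace NegHom

variable {f g : P ⟶ Q}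

/- Only the components of `f` and `g` themselves are known to lie in `C₊`, so `β` may take,
at each index, only the value of `f.α` or of `g.α` there. -/
def mix (hfg : NegHom.le f g) (β : Fin (P.n + 1) →o Fin (Q.n + 1))
    (hβ : ∀ i, β i = f.α i ∨ β i = g.α i) : P ⟶ Q :=
  NegHomT.mk' β (fun i => f.θ i ≫ Q.X.map (homOfLE (hfg.le_of_eq_or (hβ i))))
    (fun h => by
      rw [← Category.assoc, f.natural h, Category.assoc, Category.assoc, ← Functor.map_comp,
        ← Functor.map_comp, homOfLE_comp, homOfLE_comp])
    (fun i => by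
      rcases hβ i with e | e
      · rw [Q.X.map_homOfLE_of_eq _ e.symm]
        exact R.pos_comp _ _ (f.pos i) (R.pos_eqToHom _)
      · rw [hfg.θ_comp_map_of_eq _ e.symm]
        exact R.pos_comp _ _ (g.pos i) (R.pos_eqToHom _))

theorem mix_eq_left (hfg : NegHom.le f g) (β : Fin (P.n + 1) →o Fin (Q.n + 1)) (hβ)
    (h : ∀ i, β i = f.α i) : mix hfg β hβ = f :=
  NegHomT.ext h fun i => by
    dsimp [mix]
    rw [Q.X.map_homOfLE_of_eq _ (h i).symm]
    erw [Category.assoc, eqToHom_trans, eqToHom_refl, Category.comp_id]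

theorem mix_eq_right (hfg : NegHom.le f g) (β : Fin (P.n + 1) →o Fin (Q.n + 1)) (hβ)
    (h : ∀ i, β i = g.α i) : mix hfg β hβ = g :=
  NegHomT.ext h fun i => by
    dsimp [mix]
    rw [hfg.θ_comp_map_of_eq _ (h i).symm]
    erw [Category.assoc, eqToHom_trans, eqToHom_refl, Category.comp_id]

theorem mix_congr {f' g' : P ⟶ Q} (hfg : NegHom.le f g) (hfg' : NegHom.le f' g')
    {β β' : Fin (P.n + 1) →o Fin (Q.n + 1)} (hβ) (hβ') (hf : f = f') (hg : g = g')
    (h : ∀ i, β i = β' i) : mix hfg β hβ = mix hfg' β' hβ' := by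
  subst hf hg
  obtain rfl : β = β' := OrderHom.ext _ _ (funext h)
  rfl

theorem comp_mix (u : S ⟶ P) (hfg : NegHom.le f g) (β : Fin (P.n + 1) →o Fin (Q.n + 1)) (hβ) :
    u ≫ mix hfg β hβ =
      mix (NegHom.le_comp_left u hfg) (β.comp u.α) (fun i => hβ (u.α i)) :=
  Subtype.ext (ChainHom.ext' rfl (heq_of_eq (funext fun _ => (Category.assoc _ _ _).symm)))

end NegHom

abbrev NegObj.pull (P : NegObj R) {M : ℕ} (σ : Fin (M + 1) →o Fin (P.n + 1)) : NegObj R where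
  n := M
  X := σ.monotone.functor ⋙ P.X
  negMap h := P.negMap (σ.monotone h)

def NegObj.proj (P : NegObj R) {M : ℕ} (σ : Fin (M + 1) →o Fin (P.n + 1)) : P.pull σ ⟶ P :=
  NegHomT.mk' σ (fun _ => 𝟙 _) (fun _ => (Category.comp_id _).trans (Category.id_comp _).symm)
    (fun _ => R.pos_id _)

theorem NegObj.proj_gammaNeg (P : NegObj R) {M : ℕ} {σ : Fin (M + 1) →o Fin (P.n + 1)}
    (hσ : Function.Surjective σ) : GammaNeg R (P.proj σ) :=
  ⟨hσ, fun _ => ⟨rfl, rfl⟩⟩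

variable {E : Type u₂} [Category.{v₂} E] (G : NegObj R ⥤ E)

theorem map_gammaSection_comp_eq (f : P ⟶ Q) (hid : ∀ i, IsIdMor (f.θ i)) [IsIso (G.map f)]
    (d d' : Fin (Q.n + 1) →o Fin (P.n + 1)) (hd : ∀ j, f.α (d j) = j)
    (hd' : ∀ j, f.α (d' j) = j) (μ : P ⟶ S) :
    G.map (f.gammaSection hid d hd ≫ μ) = G.map (f.gammaSection hid d' hd' ≫ μ) := by
  have hinv : ∀ d hd, G.map (f.gammaSection hid d hd) = inv (G.map f) := fun d hd =>
    IsIso.eq_inv_of_inv_hom_id (by rw [← G.map_comp, f.gammaSection_comp, G.map_id])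
  rw [G.map_comp, G.map_comp, hinv, hinv]

theorem map_mix_eq_map_mix
    (hG : ∀ {P Q : NegObj R} (f : P ⟶ Q), GammaNeg R f → IsIso (G.map f))
    {f g : P ⟶ Q} (hfg : NegHom.le f g) (γ γ' : Fin (P.n + 1) →o Fin (Q.n + 1)) (hγ hγ')
    (hle : ∀ i, γ i ≤ γ' i) (hstep : ∀ i : Fin P.n, γ' i.castSucc ≤ γ i.succ) :
    G.map (NegHom.mix hfg γ hγ) = G.map (NegHom.mix hfg γ' hγ') := by
  set π := P.proj (halve P.n)
  have := hG π (P.proj_gammaNeg fun i => ⟨doubleEven P.n i, halve_doubleEven _ i⟩)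
  have hid : ∀ i, IsIdMor (π.θ i) := fun _ => ⟨rfl, rfl⟩
  let μ := NegHom.mix (NegHom.le_comp_left π hfg) ⟨_, interleave_monotone hle hstep⟩ fun k => by
    show interleave γ γ' k = f.α (halve P.n k) ∨ interleave γ γ' k = g.α (halve P.n k)
    by_cases hk : k.val % 2 = 0
    · simpa [interleave, hk] using hγ (halve P.n k)
    · simpa [interleave, hk] using hγ' (halve P.n k)
  have hμ : ∀ (γ₀ : Fin (P.n + 1) →o Fin (Q.n + 1)) (hγ₀) (d) (hd : ∀ i, π.α (d i) = i),
      (∀ i, interleave γ γ' (d i) = γ₀ i) → π.gammaSection hid d hd ≫ μ = NegHom.mix hfg γ₀ hγ₀ :=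
    fun γ₀ hγ₀ d hd h => by
      have hπ : ∀ u : P ⟶ Q, π.gammaSection hid d hd ≫ π ≫ u = u := fun u => by
        rw [← Category.assoc, π.gammaSection_comp, Category.id_comp]
      rw [NegHom.comp_mix]
      exact NegHom.mix_congr _ _ _ _ (hπ f) (hπ g) h
  rw [← hμ γ hγ _ (halve_doubleEven P.n) (interleave_doubleEven γ γ'),
    ← hμ γ' hγ' _ (halve_doubleOdd P.n) (interleave_doubleOdd γ γ')]
  exact map_gammaSection_comp_eq G π hid _ _ _ _ μ

theorem map_eq_map_of_le
    (hG : ∀ {P Q : NegObj R} (f : P ⟶ Q), GammaNeg R f → IsIso (G.map f))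
    {f g : P ⟶ Q} (hfg : NegHom.le f g) : G.map f = G.map g := by
  let h t := NegHom.mix hfg (switchAt f.α g.α hfg.α_le t) (switchAt_eq_or _ _ _ t)
  have key : ∀ t, G.map (h t) = G.map g := by
    intro t
    induction t with
    | zero => exact congrArg G.map (NegHom.mix_eq_right _ _ _ (switchAt_zero _ _ _))
    | succ t ih =>
      rw [← ih]
      exact map_mix_eq_map_mix G hG hfg _ _ _ _ (switchAt_succ_le _ _ _ t)
        (switchAt_castSucc_le_succ _ _ _ t)
  rw [← key (P.n + 1)]
  exact congrArg G.map (NegHom.mix_eq_left _ _ _ (switchAt_last _ _ _)).symm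

def DownStar.lift (G : NegObj R ⥤ E)
    (hG : ∀ {P Q : NegObj R} {f g : P ⟶ Q}, NegHom.le f g → G.map f = G.map g) :
    DownStar R ⥤ E where
  obj P := G.obj P.obj
  map f := Quot.lift G.map (fun _ _ => hG) f
  map_id P := G.map_id P.obj
  map_comp f g := Quot.inductionOn f fun f => Quot.inductionOn g (G.map_comp f)

theorem DownStar.functor_ext {H H' : DownStar R ⥤ E} (h : qStar R ⋙ H = qStar R ⋙ H') :
    H = H' :=
  CategoryTheory.Functor.ext (fun P => Functor.congr_obj h P.obj)
    (fun _ _ f => Quot.inductionOn f (Functor.congr_hom h))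

end Localization

section Statements

variable (R : ReedyStruct C)

theorem statement16 :
    (∀ {P Q : NegObj R} (f : P ⟶ Q), GammaNeg R f → IsIso ((qStar R).map f)) ∧
    (∀ {E : Type u₂} [Category.{v₂} E] (G : NegObj R ⥤ E),
      (∀ {P Q : NegObj R} (f : P ⟶ Q), GammaNeg R f → IsIso (G.map f)) →
      ∃! H : DownStar R ⥤ E, qStar R ⋙ H = G) := by
  refine ⟨isIso_qStar_map_of_gammaNeg, fun G hG => ?_⟩
  exact ⟨DownStar.lift G (map_eq_map_of_le G hG), rfl, fun H hH => DownStar.functor_ext hH⟩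

end Statements

end ReedyPaper
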